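/- arXiv:2108.12106 — 2 statements merged into one kernel-verified Lean document; each statement's English description precedes it below -/
import Mathlib

section
/- Let 0 < r < q ≤ ∞ and s ∈ ℝ, and let ⟨k⟩ = 1+|k| for k ∈ ℤ^d. Then there exists a constant C such that for all finitely supported sequences (a_k)_{k ∈ ℤ^d} of nonnegative reals one has ‖(a_k)‖_{ℓ^r} ≤ C ‖(⟨k⟩^s a_k)‖_{ℓ^q} if and only if s > d(1/r − 1/q). -/
open MeasureTheory Metric Set ENNReal
noncomputable section

/-- Lattice point `k ∈ ℤ^d` viewed as an element of `ℝ^d`. -/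
def latPt (d : ℕ) (k : Fin d → ℤ) : EuclideanSpace ℝ (Fin d) := WithLp.toLp 2 (fun i => (k i : ℝ))

/-- Fourier transform with the paper's convention `𝓕f(ξ) = ∫ f(x) e^{-i x·ξ} dx`. -/
def paperFT (d : ℕ) (f : EuclideanSpace ℝ (Fin d) → ℂ) (ξ : EuclideanSpace ℝ (Fin d)) : ℂ :=
  ∫ x, f x * Complex.exp (-Complex.I * ((inner ℝ x ξ : ℝ) : ℂ))

/-- Inverse Fourier transform `𝓕⁻¹g(x) = (2π)^{-d} ∫ g(ξ) e^{i x·ξ} dξ`. -/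
def paperFTInv (d : ℕ) (g : EuclideanSpace ℝ (Fin d) → ℂ) (x : EuclideanSpace ℝ (Fin d)) : ℂ :=
  (((2 * Real.pi) ^ d : ℝ) : ℂ)⁻¹ * ∫ ξ, g ξ * Complex.exp (Complex.I * ((inner ℝ x ξ : ℝ) : ℂ))

/-- The (distributional) Fourier transform of `f` is supported in the set `S`: for every
Schwartz function `φ` whose support is disjoint from `S`, the pairing `⟨𝓕f, φ⟩ = ⟨f, 𝓕φ⟩`
vanishes. -/
def HasFourierSupportIn (d : ℕ) (f : EuclideanSpace ℝ (Fin d) → ℂ)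
    (S : Set (EuclideanSpace ℝ (Fin d))) : Prop :=
  ∀ φ : SchwartzMap (EuclideanSpace ℝ (Fin d)) ℂ,
    Disjoint (tsupport ⇑φ) S → ∫ x, f x * paperFT d (⇑φ) x = 0

/-- `ℓ^q` (quasi-)norm, `0 < q ≤ ∞`, of an `ℝ≥0∞`-valued family. -/
def lqNorm {ι : Type*} (q : ℝ≥0∞) (a : ι → ℝ≥0∞) : ℝ≥0∞ :=
  if q = ∞ then ⨆ k, a k else (∑' k, a k ^ q.toReal) ^ (1 / q.toReal)

/-- The cube `[-r, r]^d` in `ℝ^d`. -/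
def cube (d : ℕ) (r : ℝ) : Set (EuclideanSpace ℝ (Fin d)) := {ξ | ∀ i, |ξ i| ≤ r}

/-- Uniform decomposition operator `□_k = 𝓕⁻¹ σ(· − k) 𝓕`. -/
def boxOp (d : ℕ) (σ : EuclideanSpace ℝ (Fin d) → ℝ) (k : Fin d → ℤ)
    (f : EuclideanSpace ℝ (Fin d) → ℂ) : EuclideanSpace ℝ (Fin d) → ℂ :=
  paperFTInv d (fun ξ => (σ (ξ - latPt d k) : ℂ) * paperFT d f ξ)

/-- `σ` is a smooth cutoff adapted to the unit cube, vanishing outside `[-3/4,3/4]^d`,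
whose integer translates form a partition of unity. -/
def IsUnifPartition (d : ℕ) (σ : EuclideanSpace ℝ (Fin d) → ℝ) : Prop :=
  ContDiff ℝ (⊤ : ℕ∞) σ ∧ tsupport σ ⊆ cube d (3/4) ∧
    (∀ ξ, σ ξ ∈ Icc (0:ℝ) 1) ∧ ∀ ξ, ∑' k : Fin d → ℤ, σ (ξ - latPt d k) = 1

/-- Weighted modulation space (quasi-)norm
`‖f‖_{M^s_{p,q}} = ‖(⟨k⟩^s ‖□_k f‖_{L^p})_k‖_{ℓ^q(ℤ^d)}` with `⟨k⟩ = 1 + |k|`. -/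
def modNorm (d : ℕ) (σ : EuclideanSpace ℝ (Fin d) → ℝ) (p q : ℝ≥0∞) (s : ℝ)
    (f : EuclideanSpace ℝ (Fin d) → ℂ) : ℝ≥0∞ :=
  lqNorm q (fun k : Fin d → ℤ =>
    ENNReal.ofReal ((1 + ‖latPt d k‖) ^ s) * eLpNorm (boxOp d σ k f) p volume)

/-- `ψ` is a smooth radial bump with `ψ = 1` on the unit ball and `ψ = 0` outside `B(0,2)`. -/
def IsDyadicBump (d : ℕ) (ψ : EuclideanSpace ℝ (Fin d) → ℝ) : Prop :=
  ContDiff ℝ (⊤ : ℕ∞) ψ ∧ (∀ ξ, ψ ξ ∈ Icc (0:ℝ) 1) ∧ (∀ ξ, ‖ξ‖ ≤ 1 → ψ ξ = 1) ∧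
    (∀ ξ, 2 ≤ ‖ξ‖ → ψ ξ = 0) ∧ ∀ ξ ζ, ‖ξ‖ = ‖ζ‖ → ψ ξ = ψ ζ

/-- Symbols of the dyadic decomposition: `φ_0 = ψ`, `φ_j(ξ) = ψ(2^{-j}ξ) - ψ(2^{-j+1}ξ)`. -/
def dyadicSymb (d : ℕ) (ψ : EuclideanSpace ℝ (Fin d) → ℝ) (j : ℕ)
    (ξ : EuclideanSpace ℝ (Fin d)) : ℝ :=
  if j = 0 then ψ ξ else ψ (((2:ℝ) ^ (-(j:ℝ))) • ξ) - ψ (((2:ℝ) ^ (1 - (j:ℝ))) • ξ)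

/-- Dyadic (Littlewood–Paley) decomposition operator `Δ_j = 𝓕⁻¹ φ_j 𝓕`. -/
def deltaOp (d : ℕ) (ψ : EuclideanSpace ℝ (Fin d) → ℝ) (j : ℕ)
    (f : EuclideanSpace ℝ (Fin d) → ℂ) : EuclideanSpace ℝ (Fin d) → ℂ :=
  paperFTInv d (fun ξ => (dyadicSymb d ψ j ξ : ℂ) * paperFT d f ξ)

/-- Besov (quasi-)norm `‖f‖_{B^s_{p,q}} = ‖(2^{js}‖Δ_j f‖_{L^p})_{j≥0}‖_{ℓ^q}`. -/
def besovNorm (d : ℕ) (ψ : EuclideanSpace ℝ (Fin d) → ℝ) (p q : ℝ≥0∞) (s : ℝ)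
    (f : EuclideanSpace ℝ (Fin d) → ℂ) : ℝ≥0∞ :=
  lqNorm q (fun j : ℕ =>
    ENNReal.ofReal ((2:ℝ) ^ (s * (j:ℝ))) * eLpNorm (deltaOp d ψ j f) p volume)

/-- Triebel–Lizorkin (quasi-)norm `‖f‖_{F^s_{p,q}} = ‖ ‖(2^{js}Δ_j f)_{j≥0}‖_{ℓ^q} ‖_{L^p}`. -/
def triebelNorm (d : ℕ) (ψ : EuclideanSpace ℝ (Fin d) → ℝ) (p q : ℝ≥0∞) (s : ℝ)
    (f : EuclideanSpace ℝ (Fin d) → ℂ) : ℝ≥0∞ :=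
  let g : EuclideanSpace ℝ (Fin d) → ℝ≥0∞ := fun x =>
    lqNorm q (fun j : ℕ =>
      ENNReal.ofReal ((2:ℝ) ^ (s * (j:ℝ))) * (‖deltaOp d ψ j f x‖₊ : ℝ≥0∞))
  if p = ∞ then essSup g volume else (∫⁻ x, g x ^ p.toReal) ^ (1 / p.toReal)

/-- Bessel potential `(I - Δ)^{s/2} f = 𝓕⁻¹ (1+|ξ|²)^{s/2} 𝓕 f`. -/
def besselOp (d : ℕ) (s : ℝ) (f : EuclideanSpace ℝ (Fin d) → ℂ) :
    EuclideanSpace ℝ (Fin d) → ℂ :=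
  paperFTInv d (fun ξ => ((((1 + ‖ξ‖ ^ 2) ^ (s / 2) : ℝ)) : ℂ) * paperFT d f ξ)

/-- `L^r` Sobolev norm `‖f‖_{W^{s,r}} = ‖(I-Δ)^{s/2} f‖_{L^r}`. -/
def sobolevNorm (d : ℕ) (s : ℝ) (r : ℝ≥0∞) (f : EuclideanSpace ℝ (Fin d) → ℂ) : ℝ≥0∞ :=
  eLpNorm (besselOp d s f) r volume

/-- `H^s` Sobolev norm `‖⟨ξ⟩^s 𝓕f‖_{L²}` with `⟨ξ⟩ = 1 + |ξ|`. -/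
def hsNorm (d : ℕ) (s : ℝ) (f : EuclideanSpace ℝ (Fin d) → ℂ) : ℝ≥0∞ :=
  eLpNorm (fun ξ => ((((1 + ‖ξ‖) ^ s : ℝ)) : ℂ) * paperFT d f ξ) 2 volume

/-- `τ(p,q) = d·max{0, 1/q − 1/p, 1/q + 1/p − 1}` (convention `1/∞ = 0`). -/
def tauExp (d : ℕ) (p q : ℝ≥0∞) : ℝ :=
  d * max 0 (max (1 / q.toReal - 1 / p.toReal) (1 / q.toReal + 1 / p.toReal - 1))

/-- `σ(p,q) = d·min{0, 1/q − 1/p, 1/q + 1/p − 1}` (convention `1/∞ = 0`). -/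
def sigmaExp (d : ℕ) (p q : ℝ≥0∞) : ℝ :=
  d * min 0 (min (1 / q.toReal - 1 / p.toReal) (1 / q.toReal + 1 / p.toReal - 1))

/-- Conjugate exponent, with the convention `p' = ∞` when `p < 1`. -/
def conjExp (p : ℝ≥0∞) : ℝ≥0∞ := if p < 1 then ∞ else (1 - p⁻¹)⁻¹

namespace WSE

lemma abs_coord_le (d : ℕ) (k : Fin d → ℤ) (i : Fin d) : |(k i : ℝ)| ≤ ‖latPt d k‖ := by
  have h := EuclideanSpace.norm_eq (latPt d k)
  rw [h]
  have h1 : |(k i : ℝ)| = Real.sqrt (‖(latPt d k) i‖ ^ 2) := by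
    simp [latPt, Real.sqrt_sq_eq_abs]
  rw [h1]
  apply Real.sqrt_le_sqrt
  exact Finset.single_le_sum (f := fun j => ‖(latPt d k) j‖ ^ 2)
    (fun j _ => sq_nonneg _) (Finset.mem_univ i)

lemma tsum_pi_prod (d : ℕ) (F : ℤ → ℝ≥0∞) :
    ∑' k : Fin d → ℤ, ∏ i, F (k i) = (∑' n : ℤ, F n) ^ d := by
  induction d with
  | zero =>
    simp only [Finset.univ_eq_empty, Finset.prod_empty, pow_zero]
    exact tsum_eq_single (Fin.elim0 : Fin 0 → ℤ) (fun b hb => (hb (Subsingleton.elim b _)).elim)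
  | succ n ih =>
    rw [← (Fin.consEquiv (fun _ : Fin (n+1) => ℤ)).tsum_eq]
    have : ∀ p : ℤ × (Fin n → ℤ), ∏ i, F ((Fin.consEquiv (fun _ : Fin (n+1) => ℤ)) p i)
        = F p.1 * ∏ i, F (p.2 i) := by
      intro p
      rw [Fin.prod_univ_succ]
      simp [Fin.consEquiv]
    calc ∑' p : ℤ × (Fin n → ℤ), ∏ i, F ((Fin.consEquiv fun _ => ℤ) p i)
        = ∑' p : ℤ × (Fin n → ℤ), F p.1 * ∏ i, F (p.2 i) := by exact tsum_congr this
      _ = ∑' a : ℤ, ∑' b : Fin n → ℤ, F a * ∏ i, F (b i) := ENNReal.tsum_prod (f := fun (a : ℤ) (b : Fin n → ℤ) => F a * ∏ i, F (b i))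
      _ = (∑' n : ℤ, F n) ^ (n+1) := by
          simp_rw [ENNReal.tsum_mul_left, ih, ENNReal.tsum_mul_right]
          ring

lemma tsum_int_lt_top (u : ℝ) (hu : 1 < u) :
    ∑' n : ℤ, ENNReal.ofReal ((1 + |(n : ℝ)|) ^ (-u)) ≠ ∞ := by
  have hs : Summable (fun n : ℤ => (1 + |(n : ℝ)|) ^ (-u)) := by
    have h2 : Summable (fun n : ℤ => 1 / |(n : ℝ) + (1/2)| ^ u) :=
      (Real.summable_one_div_int_add_rpow (1/2) u).mpr hu
    apply h2.of_nonneg_of_le (fun n => Real.rpow_nonneg (by positivity) _)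
    intro n
    have h0 : (0:ℝ) < |(n:ℝ) + 1/2| := by
      rw [abs_pos]
      intro h
      have h2 : ((2*n : ℤ) : ℝ) = -1 := by push_cast; linarith
      have h3 : (2*n : ℤ) = -1 := by exact_mod_cast h2
      omega
    have h1 : |(n:ℝ) + 1/2| ≤ 1 + |(n:ℝ)| := by
      calc |(n:ℝ) + 1/2| ≤ |(n:ℝ)| + |(1/2 : ℝ)| := abs_add_le _ _
        _ ≤ 1 + |(n:ℝ)| := by rw [abs_of_nonneg (by norm_num : (0:ℝ) ≤ 1/2)]; linarith [abs_nonneg ((n:ℝ))]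
    rw [one_div, ← Real.rpow_neg (abs_nonneg _)]
    exact Real.rpow_le_rpow_of_nonpos h0 h1 (by linarith)
  rw [← ENNReal.ofReal_tsum_of_nonneg (fun n => Real.rpow_nonneg (by positivity) _) hs]
  exact ENNReal.ofReal_ne_top

lemma one_le_w (d : ℕ) (k : Fin d → ℤ) : (1:ℝ) ≤ 1 + ‖latPt d k‖ := by
  linarith [norm_nonneg (latPt d k)]

lemma Z_lt_top (d : ℕ) (hd : 0 < d) (t : ℝ) (ht : (d : ℝ) < t) :
    ∑' k : Fin d → ℤ, ENNReal.ofReal ((1 + ‖latPt d k‖) ^ (-t)) ≠ ∞ := by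
  have hdR : (0:ℝ) < d := by exact_mod_cast hd
  set u : ℝ := t / d with hu
  have hu1 : 1 < u := (lt_div_iff₀ hdR).mpr (by linarith)
  have hbound : ∀ k : Fin d → ℤ,
      ENNReal.ofReal ((1 + ‖latPt d k‖) ^ (-t)) ≤
        ∏ i, ENNReal.ofReal ((1 + |(k i : ℝ)|) ^ (-u)) := by
    intro k
    rw [← ENNReal.ofReal_prod_of_nonneg (fun i _ => Real.rpow_nonneg (by positivity) _)]
    apply ENNReal.ofReal_le_ofReal
    rw [Real.finset_prod_rpow _ _ (fun i _ => by positivity)]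
    have hw : (0:ℝ) < 1 + ‖latPt d k‖ := lt_of_lt_of_le one_pos (one_le_w d k)
    have hprod : ∏ i, (1 + |(k i : ℝ)|) ≤ (1 + ‖latPt d k‖) ^ (d : ℕ) := by
      have : ∏ i : Fin d, (1 + |(k i : ℝ)|) ≤ ∏ i : Fin d, (1 + ‖latPt d k‖) :=
        Finset.prod_le_prod (fun i _ => by positivity)
          (fun i _ => by linarith [abs_coord_le d k i])
      simpa using this
    have h2 : (1 + ‖latPt d k‖) ^ (-t) = ((1 + ‖latPt d k‖) ^ (d:ℕ)) ^ (-u) := by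
      rw [← Real.rpow_natCast (1 + ‖latPt d k‖) d, ← Real.rpow_mul hw.le]
      congr 1
      rw [hu]; field_simp
    rw [h2]
    exact Real.rpow_le_rpow_of_nonpos (by positivity) hprod (by linarith)
  have hle : ∑' k : Fin d → ℤ, ENNReal.ofReal ((1 + ‖latPt d k‖) ^ (-t)) ≤
      (∑' n : ℤ, ENNReal.ofReal ((1 + |(n : ℝ)|) ^ (-u))) ^ d := by
    rw [← tsum_pi_prod d _]
    exact ENNReal.tsum_le_tsum hbound
  exact ne_top_of_le_ne_top (ENNReal.pow_ne_top (tsum_int_lt_top u hu1)) hle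

lemma holder_tsum {ι : Type*} [Countable ι] [MeasurableSpace ι] [MeasurableSingletonClass ι]
    {p q : ℝ} (hpq : p.HolderConjugate q) (f g : ι → ℝ≥0∞) :
    ∑' i, f i * g i ≤ (∑' i, f i ^ p) ^ (1 / p) * (∑' i, g i ^ q) ^ (1 / q) := by
  have h := ENNReal.lintegral_mul_le_Lp_mul_Lq (μ := Measure.count (α := ι)) hpq
    (measurable_of_countable f).aemeasurable (measurable_of_countable g).aemeasurable
  simpa [MeasureTheory.lintegral_count] using h

example (d : ℕ) (f g : (Fin d → ℤ) → ℝ≥0∞) {p q : ℝ} (hpq : p.HolderConjugate q) :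
    ∑' i, f i * g i ≤ (∑' i, f i ^ p) ^ (1 / p) * (∑' i, g i ^ q) ^ (1 / q) :=
  holder_tsum hpq f g

lemma sufficiency (d : ℕ) (hd : 0 < d) (r q : ℝ≥0∞) (hr : 0 < r) (hrq : r < q) (s : ℝ)
    (hs : (d : ℝ) * (1 / r.toReal - 1 / q.toReal) < s) :
    ∃ C : ℝ, 0 < C ∧ ∀ a : (Fin d → ℤ) → ℝ, (Function.support a).Finite →
        (∀ k, 0 ≤ a k) →
        lqNorm r (fun k : Fin d → ℤ => ENNReal.ofReal (a k)) ≤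
          ENNReal.ofReal C *
            lqNorm q (fun k : Fin d → ℤ =>
              ENNReal.ofReal ((1 + ‖latPt d k‖) ^ s * a k)) := by
  have hrtop : r ≠ ⊤ := ne_top_of_lt hrq
  set rt := r.toReal with hrtdef
  set qt := q.toReal with hqtdef
  have hrt : 0 < rt := ENNReal.toReal_pos hr.ne' hrtop
  set δ : ℝ := 1 / rt - 1 / qt with hδdef
  have hδ : 0 < δ := by
    by_cases hq : q = ⊤
    · rw [hδdef, hqtdef, hq]
      norm_num
      exact hrt
    · have hqt : 0 < qt := ENNReal.toReal_pos (hr.trans hrq).ne' hq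
      have : rt < qt := (ENNReal.toReal_lt_toReal hrtop hq).mpr hrq
      have := one_div_lt_one_div_of_lt hrt this
      simp only [hδdef]; linarith
  have hspos : 0 < s := lt_of_le_of_lt (mul_nonneg (Nat.cast_nonneg d) hδ.le) hs
  set t0 : ℝ := s / δ with ht0def
  have ht0 : (d : ℝ) < t0 := (lt_div_iff₀ hδ).mpr (by linarith [hs])
  set w : (Fin d → ℤ) → ℝ := fun k => 1 + ‖latPt d k‖ with hwdef
  have hw1 : ∀ k, (1:ℝ) ≤ w k := fun k => one_le_w d k
  have hw0 : ∀ k, (0:ℝ) < w k := fun k => lt_of_lt_of_le one_pos (hw1 k)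
  set Z : ℝ≥0∞ := ∑' k : Fin d → ℤ, ENNReal.ofReal ((w k) ^ (-t0)) with hZdef
  have hZ : Z ≠ ∞ := Z_lt_top d hd t0 ht0
  have hZd : Z ^ δ ≠ ⊤ := ENNReal.rpow_ne_top_of_nonneg hδ.le hZ
  set C : ℝ := (Z ^ δ).toReal + 1 with hCdef
  have hCZ : Z ^ δ ≤ ENNReal.ofReal C := by
    calc Z ^ δ = ENNReal.ofReal ((Z ^ δ).toReal) := (ENNReal.ofReal_toReal hZd).symm
      _ ≤ ENNReal.ofReal C := ENNReal.ofReal_le_ofReal (by simp [hCdef])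
  refine ⟨C, by positivity, ?_⟩
  intro a hafin ha
  have hkey : ∀ k, ENNReal.ofReal (a k) =
      ENNReal.ofReal (w k ^ s * a k) * ENNReal.ofReal (w k ^ (-s)) := by
    intro k
    rw [← ENNReal.ofReal_mul (mul_nonneg (Real.rpow_nonneg (hw0 k).le s) (ha k))]
    congr 1
    rw [Real.rpow_neg (hw0 k).le]
    field_simp
    rw [mul_div_assoc, div_self (Real.rpow_pos_of_pos (hw0 k) s).ne', mul_one]
  have hlq : lqNorm r (fun k : Fin d → ℤ => ENNReal.ofReal (a k)) =
      (∑' k : Fin d → ℤ, ENNReal.ofReal (a k) ^ rt) ^ (1 / rt) := by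
    simp [lqNorm, hrtop, hrtdef]
  by_cases hq : q = ⊤
  · -- q = ∞
    have hqt0 : qt = 0 := by simp [hqtdef, hq]
    have hδrt : δ = 1 / rt := by simp [hδdef, hqt0]
    have ht0rt : t0 = s * rt := by
      rw [ht0def, hδrt, one_div, div_eq_mul_inv, inv_inv]
    set S : ℝ≥0∞ := ⨆ k : Fin d → ℤ, ENNReal.ofReal (w k ^ s * a k) with hSdef
    have hRHS : lqNorm q (fun k : Fin d → ℤ => ENNReal.ofReal (w k ^ s * a k)) = S := by
      simp [lqNorm, hq, hSdef]
    have hterm : ∀ k, ENNReal.ofReal (a k) ^ rt ≤ S ^ rt * ENNReal.ofReal (w k ^ (-t0)) := by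
      intro k
      have h1 : ENNReal.ofReal (a k) ≤ S * ENNReal.ofReal (w k ^ (-s)) := by
        have hle : ENNReal.ofReal (w k ^ s * a k) ≤ S :=
          le_iSup (fun k : Fin d → ℤ => ENNReal.ofReal (w k ^ s * a k)) k
        rw [hkey k]
        exact mul_le_mul_left hle _
      calc ENNReal.ofReal (a k) ^ rt ≤ (S * ENNReal.ofReal (w k ^ (-s))) ^ rt :=
            ENNReal.rpow_le_rpow h1 hrt.le
        _ = S ^ rt * ENNReal.ofReal (w k ^ (-t0)) := by
            rw [ENNReal.mul_rpow_of_nonneg _ _ hrt.le,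
              ENNReal.ofReal_rpow_of_nonneg (by positivity) hrt.le,
              ← Real.rpow_mul (hw0 k).le, ht0rt]
            ring_nf
    calc lqNorm r (fun k : Fin d → ℤ => ENNReal.ofReal (a k))
        = (∑' k : Fin d → ℤ, ENNReal.ofReal (a k) ^ rt) ^ (1 / rt) := hlq
      _ ≤ (∑' k : Fin d → ℤ, S ^ rt * ENNReal.ofReal (w k ^ (-t0))) ^ (1 / rt) :=
          ENNReal.rpow_le_rpow (ENNReal.tsum_le_tsum hterm) (by positivity)
      _ = (S ^ rt * Z) ^ (1 / rt) := by rw [ENNReal.tsum_mul_left]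
      _ = S * Z ^ δ := by
          rw [ENNReal.mul_rpow_of_nonneg _ _ (by positivity), ← ENNReal.rpow_mul,
            mul_one_div_cancel hrt.ne', ENNReal.rpow_one, hδrt]
      _ ≤ S * ENNReal.ofReal C := mul_le_mul_right hCZ S
      _ = ENNReal.ofReal C * lqNorm q (fun k : Fin d → ℤ =>
            ENNReal.ofReal (w k ^ s * a k)) := by rw [hRHS, mul_comm]
  · -- q < ∞
    have hqt : 0 < qt := ENNReal.toReal_pos (hr.trans hrq).ne' hq
    have hrtqt : rt < qt := (ENNReal.toReal_lt_toReal hrtop hq).mpr hrq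
    set u : ℝ := rt / qt with hudef
    have hu0 : 0 < u := by positivity
    have hu1 : u < 1 := (div_lt_one hqt).mpr hrtqt
    have hconj : (u⁻¹).HolderConjugate ((1 - u)⁻¹) :=
      Real.HolderConjugate.inv_one_sub_inv hu0 hu1
    set P : ℝ := u⁻¹ with hPdef
    set P' : ℝ := (1 - u)⁻¹ with hP'def
    have hP0 : 0 < P := hconj.pos
    have hP'0 : 0 < P' := hconj.symm.pos
    have hrtP : rt * P = qt := by
      rw [hPdef, hudef]
      field_simp
    have hrtP' : rt * P' = 1 / δ := by
      have e1 : (1:ℝ) - u = (qt - rt)/qt := by rw [hudef]; field_simp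
      have e2 : δ = (qt - rt)/(rt*qt) := by rw [hδdef]; field_simp; try ring
      have h2 : qt - rt ≠ 0 := sub_ne_zero.mpr hrtqt.ne'
      rw [hP'def, e1, e2, one_div, inv_div, inv_div]
      field_simp
      try ring
    have hst0 : s * (rt * P') = t0 := by rw [hrtP', ht0def]; field_simp
    have hterm : ∀ k, ENNReal.ofReal (a k) ^ rt =
        ENNReal.ofReal (w k ^ s * a k) ^ rt * ENNReal.ofReal (w k ^ (-s)) ^ rt := by
      intro k
      rw [hkey k, ENNReal.mul_rpow_of_nonneg _ _ hrt.le]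
    have hholder : ∑' k : Fin d → ℤ, ENNReal.ofReal (a k) ^ rt ≤
        (∑' k : Fin d → ℤ, ENNReal.ofReal (w k ^ s * a k) ^ qt) ^ (1 / P) * Z ^ (1 / P') := by
      have h := holder_tsum hconj (fun k : Fin d → ℤ => ENNReal.ofReal (w k ^ s * a k) ^ rt)
        (fun k : Fin d → ℤ => ENNReal.ofReal (w k ^ (-s)) ^ rt)
      have e1 : ∀ k : Fin d → ℤ, (ENNReal.ofReal (w k ^ s * a k) ^ rt) ^ P =
          ENNReal.ofReal (w k ^ s * a k) ^ qt := by
        intro k; rw [← ENNReal.rpow_mul, hrtP]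
      have e2 : ∀ k : Fin d → ℤ, (ENNReal.ofReal (w k ^ (-s)) ^ rt) ^ P' =
          ENNReal.ofReal (w k ^ (-t0)) := by
        intro k
        rw [← ENNReal.rpow_mul, ENNReal.ofReal_rpow_of_nonneg (by positivity) (by positivity),
          ← Real.rpow_mul (hw0 k).le]
        congr 2
        rw [← hst0]; ring
      simp only [e1, e2] at h
      calc ∑' k : Fin d → ℤ, ENNReal.ofReal (a k) ^ rt
          = ∑' k : Fin d → ℤ, ENNReal.ofReal (w k ^ s * a k) ^ rt *
              ENNReal.ofReal (w k ^ (-s)) ^ rt := tsum_congr hterm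
        _ ≤ _ := h
    have hRHS : lqNorm q (fun k : Fin d → ℤ => ENNReal.ofReal (w k ^ s * a k)) =
        (∑' k : Fin d → ℤ, ENNReal.ofReal (w k ^ s * a k) ^ qt) ^ (1 / qt) := by
      simp [lqNorm, hq, hqtdef]
    calc lqNorm r (fun k : Fin d → ℤ => ENNReal.ofReal (a k))
        = (∑' k : Fin d → ℤ, ENNReal.ofReal (a k) ^ rt) ^ (1 / rt) := hlq
      _ ≤ ((∑' k : Fin d → ℤ, ENNReal.ofReal (w k ^ s * a k) ^ qt) ^ (1 / P) *
            Z ^ (1 / P')) ^ (1 / rt) := ENNReal.rpow_le_rpow hholder (by positivity)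
      _ = (∑' k : Fin d → ℤ, ENNReal.ofReal (w k ^ s * a k) ^ qt) ^ (1 / qt) * Z ^ δ := by
          rw [ENNReal.mul_rpow_of_nonneg _ _ (by positivity), ← ENNReal.rpow_mul,
            ← ENNReal.rpow_mul]
          congr 2
          · rw [← hrtP]; field_simp
          · rw [one_div, one_div, ← mul_inv, mul_comm P' rt, hrtP', one_div, inv_inv]
      _ ≤ (∑' k : Fin d → ℤ, ENNReal.ofReal (w k ^ s * a k) ^ qt) ^ (1 / qt) *
            ENNReal.ofReal C := mul_le_mul_right hCZ _
      _ = ENNReal.ofReal C * lqNorm q (fun k : Fin d → ℤ =>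
            ENNReal.ofReal (w k ^ s * a k)) := by rw [hRHS, mul_comm]

lemma rpow_sandwich {x y c s : ℝ} (hy : 1 ≤ y) (h1 : y ≤ x) (h2 : x ≤ c * y) (hc : 1 ≤ c) :
    x ^ s ≤ c ^ |s| * y ^ s := by
  have hy0 : (0:ℝ) < y := lt_of_lt_of_le one_pos hy
  have hx0 : (0:ℝ) < x := lt_of_lt_of_le hy0 h1
  have hcabs : (1:ℝ) ≤ c ^ |s| := by
    have := Real.rpow_le_rpow_of_exponent_le hc (abs_nonneg s)
    rwa [Real.rpow_zero] at this
  rcases le_or_gt 0 s with hs | hs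
  · calc x ^ s ≤ (c * y) ^ s := Real.rpow_le_rpow hx0.le h2 hs
      _ = c ^ s * y ^ s := Real.mul_rpow (by linarith) hy0.le
      _ ≤ c ^ |s| * y ^ s := by
          have := Real.rpow_le_rpow_of_exponent_le hc (le_abs_self s)
          exact mul_le_mul_of_nonneg_right this (Real.rpow_nonneg hy0.le s)
  · calc x ^ s ≤ y ^ s := Real.rpow_le_rpow_of_nonpos hy0 h1 hs.le
      _ ≤ c ^ |s| * y ^ s := le_mul_of_one_le_left (Real.rpow_nonneg hy0.le s) hcabs

lemma norm_latPt_le (d : ℕ) (k : Fin d → ℤ) (m : ℕ) (h : ∀ i, |k i| ≤ (m : ℤ)) :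
    ‖latPt d k‖ ≤ Real.sqrt d * m := by
  rw [EuclideanSpace.norm_eq]
  have hb : ∀ i : Fin d, ‖(latPt d k) i‖ ^ 2 ≤ (m:ℝ) ^ 2 := by
    intro i
    have h1 : |(k i : ℝ)| ≤ (m : ℝ) := by
      rw [← Int.cast_abs]
      exact_mod_cast h i
    calc ‖(latPt d k) i‖ ^ 2 = |(k i : ℝ)| ^ 2 := by simp [latPt]
      _ ≤ (m:ℝ) ^ 2 := by
          apply pow_le_pow_left₀ (abs_nonneg _) h1
  calc Real.sqrt (∑ i, ‖(latPt d k) i‖ ^ 2) ≤ Real.sqrt (∑ _i : Fin d, (m:ℝ) ^ 2) :=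
        Real.sqrt_le_sqrt (Finset.sum_le_sum fun i _ => hb i)
    _ = Real.sqrt ((d : ℝ) * (m:ℝ) ^ 2) := by rw [Finset.sum_const, Finset.card_univ,
        Fintype.card_fin, nsmul_eq_mul]
    _ = Real.sqrt d * m := by
        rw [Real.sqrt_mul (Nat.cast_nonneg d), Real.sqrt_sq (Nat.cast_nonneg m)]

def shell (d : ℕ) (i0 : Fin d) (m : ℕ) : Finset (Fin d → ℤ) :=
  Fintype.piFinset (fun i => if i = i0 then {((m:ℤ))} else Finset.Icc (-(m:ℤ)) (m:ℤ))

lemma mem_shell_iff {d : ℕ} {i0 : Fin d} {m : ℕ} {k : Fin d → ℤ} :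
    k ∈ shell d i0 m ↔ (k i0 = (m:ℤ) ∧ ∀ i, |k i| ≤ (m:ℤ)) := by
  rw [shell, Fintype.mem_piFinset]
  constructor
  · intro h
    have h0 := h i0
    rw [if_pos rfl, Finset.mem_singleton] at h0
    refine ⟨h0, fun i => ?_⟩
    by_cases hi : i = i0
    · subst hi
      rw [h0, abs_of_nonneg (by positivity)]
    · have hh := h i
      rw [if_neg hi, Finset.mem_Icc] at hh
      exact abs_le.mpr hh
  · rintro ⟨h0, h⟩ i
    by_cases hi : i = i0
    · subst hi
      simp [h0]
    · rw [if_neg hi, Finset.mem_Icc]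
      exact abs_le.mp (h i)

lemma card_shell (d : ℕ) (i0 : Fin d) (m : ℕ) :
    (shell d i0 m).card = (2 * m + 1) ^ (d - 1) := by
  rw [shell, Fintype.card_piFinset,
    ← Finset.mul_prod_erase Finset.univ _ (Finset.mem_univ i0), if_pos rfl,
    Finset.card_singleton, one_mul]
  have hconst : ∀ i ∈ Finset.univ.erase i0,
      ((if i = i0 then ({((m:ℤ))} : Finset ℤ) else Finset.Icc (-(m:ℤ)) (m:ℤ))).card
        = 2 * m + 1 := by
    intro i hi
    rw [if_neg (Finset.ne_of_mem_erase hi), Int.card_Icc]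
    omega
  rw [Finset.prod_congr rfl hconst, Finset.prod_const,
    Finset.card_erase_of_mem (Finset.mem_univ i0), Finset.card_univ, Fintype.card_fin]

lemma shell_disjoint (d : ℕ) (i0 : Fin d) {m m' : ℕ} (h : m ≠ m') :
    Disjoint (shell d i0 m) (shell d i0 m') := by
  rw [Finset.disjoint_left]
  intro k hk hk'
  have h1 := (mem_shell_iff.mp hk).1
  have h2 := (mem_shell_iff.mp hk').1
  rw [h1] at h2
  exact h (by exact_mod_cast h2)

lemma harmonic_tendsto :
    Filter.Tendsto (fun N : ℕ => ∑ m ∈ Finset.Icc 1 N, (1 + (m:ℝ))⁻¹)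
      Filter.atTop Filter.atTop := by
  have hid : ∀ N : ℕ, ∑ m ∈ Finset.Icc 1 N, (1 + (m:ℝ))⁻¹
      = (∑ i ∈ Finset.range (N+1), (1:ℝ)/(i+1)) - 1 := by
    intro N
    induction N with
    | zero => simp
    | succ n ih =>
      rw [Finset.sum_Icc_succ_top (by omega : 1 ≤ n + 1), ih,
        Finset.sum_range_succ (n := n + 1)]
      push_cast
      ring_nf
  have h1 := Real.tendsto_sum_range_one_div_nat_succ_atTop
  have h2 := h1.comp (Filter.tendsto_add_atTop_nat 1)
  have h3 := Filter.tendsto_atTop_add_const_right Filter.atTop (-1) h2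
  refine h3.congr fun N => ?_
  rw [hid N]
  simp [Function.comp, sub_eq_add_neg]

lemma necessity (d : ℕ) (hd : 0 < d) (r q : ℝ≥0∞) (hr : 0 < r) (hrq : r < q) (s : ℝ)
    (hex : ∃ C : ℝ, 0 < C ∧ ∀ a : (Fin d → ℤ) → ℝ, (Function.support a).Finite →
        (∀ k, 0 ≤ a k) →
        lqNorm r (fun k : Fin d → ℤ => ENNReal.ofReal (a k)) ≤
          ENNReal.ofReal C *
            lqNorm q (fun k : Fin d → ℤ =>
              ENNReal.ofReal ((1 + ‖latPt d k‖) ^ s * a k))) :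
    (d : ℝ) * (1 / r.toReal - 1 / q.toReal) < s := by
  obtain ⟨C, hC, hA⟩ := hex
  by_contra hcon
  push_neg at hcon
  have hrtop : r ≠ ⊤ := ne_top_of_lt hrq
  set rt : ℝ := r.toReal with hrtdef
  have hrt : 0 < rt := ENNReal.toReal_pos hr.ne' hrtop
  set Qi : ℝ := 1 / q.toReal with hQidef
  have hQi0 : 0 ≤ Qi := by rw [hQidef]; positivity
  have hQirt : Qi * rt ≤ 1 := by
    by_cases hq : q = ⊤
    · rw [hQidef, hq]
      norm_num
    · have hqt : 0 < q.toReal := ENNReal.toReal_pos (hr.trans hrq).ne' hq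
      have hlt : rt < q.toReal := (ENNReal.toReal_lt_toReal hrtop hq).mpr hrq
      rw [hQidef, div_mul_eq_mul_div, one_mul, div_le_one hqt]
      exact hlt.le
  set δ : ℝ := 1 / rt - Qi with hδdef
  have hδ : 0 < δ := by
    rw [hδdef]
    by_cases hq : q = ⊤
    · rw [hQidef, hq]
      norm_num
      exact hrt
    · have hqt : 0 < q.toReal := ENNReal.toReal_pos (hr.trans hrq).ne' hq
      have hlt : rt < q.toReal := (ENNReal.toReal_lt_toReal hrtop hq).mpr hrq
      rw [hQidef]
      have := one_div_lt_one_div_of_lt hrt hlt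
      linarith
  have hs' : s * rt ≤ (d:ℝ) * (1 - Qi * rt) := by
    have h1 : s ≤ (d:ℝ) * (1/rt - Qi) := hcon
    have h2 := mul_le_mul_of_nonneg_right h1 hrt.le
    calc s * rt ≤ (d:ℝ) * (1/rt - Qi) * rt := h2
      _ = (d:ℝ) * (1 - Qi * rt) := by rw [mul_assoc, sub_mul, one_div, inv_mul_cancel₀ hrt.ne']
  set i0 : Fin d := ⟨0, hd⟩ with hi0def
  have hsqrtd : 1 ≤ Real.sqrt d := by
    rw [show (1:ℝ) = Real.sqrt 1 by simp]
    exact Real.sqrt_le_sqrt (by exact_mod_cast hd)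
  set Ks : ℝ := Real.sqrt d ^ |s| with hKsdef
  have hKs1 : 1 ≤ Ks := by
    have := Real.rpow_le_rpow_of_exponent_le hsqrtd (abs_nonneg s)
    rwa [Real.rpow_zero] at this
  have hKs0 : 0 < Ks := lt_of_lt_of_le one_pos hKs1
  set g : ℕ → ℝ := fun m => (1+(m:ℝ)) ^ (-(s+Qi)) * (2*(m:ℝ)+1) ^ (-((d:ℝ)-1)*Qi) with hgdef
  have hg0 : ∀ m, 0 < g m := fun m =>
    mul_pos (Real.rpow_pos_of_pos (by positivity) _) (Real.rpow_pos_of_pos (by positivity) _)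
  -- weight bounds on shells
  have hws : ∀ (m : ℕ), ∀ k ∈ shell d i0 m,
      (1 + ‖latPt d k‖) ^ s ≤ Ks * (1+(m:ℝ)) ^ s := by
    intro m k hk
    have h0 := (mem_shell_iff.mp hk).1
    have hlow : 1 + (m:ℝ) ≤ 1 + ‖latPt d k‖ := by
      have h2 := abs_coord_le d k i0
      rw [h0] at h2
      have h3 : (m:ℝ) ≤ ‖latPt d k‖ := by
        rw [← abs_of_nonneg (Nat.cast_nonneg m : (0:ℝ) ≤ (m:ℝ))]
        exact_mod_cast h2
      linarith
    have hhigh : 1 + ‖latPt d k‖ ≤ Real.sqrt d * (1 + (m:ℝ)) := by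
      have h2 := norm_latPt_le d k m (mem_shell_iff.mp hk).2
      nlinarith [Nat.cast_nonneg (α := ℝ) m]
    exact rpow_sandwich (by have := Nat.cast_nonneg (α := ℝ) m; linarith) hlow hhigh hsqrtd
  -- real per-shell estimates
  have hcast : ∀ m : ℕ, (((2*m+1)^(d-1) : ℕ) : ℝ) = (2*(m:ℝ)+1) ^ ((d:ℝ)-1) := by
    intro m
    have h1 : ((d-1 : ℕ):ℝ) = (d:ℝ) - 1 := by
      have h2 : 1 ≤ d := hd
      push_cast [h2]
      ring
    rw [← h1, Real.rpow_natCast]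
    push_cast
    ring
  have hprodA : ∀ m : ℕ, (((2*m+1)^(d-1) : ℕ) : ℝ) * g m ^ rt
      = (1+(m:ℝ)) ^ (-(s+Qi)*rt) * (2*(m:ℝ)+1) ^ (((d:ℝ)-1)*(1-Qi*rt)) := by
    intro m
    have hz0 : (0:ℝ) < 1+(m:ℝ) := by positivity
    have hc0 : (0:ℝ) < 2*(m:ℝ)+1 := by positivity
    rw [hcast m, hgdef]
    simp only []
    rw [Real.mul_rpow (Real.rpow_nonneg hz0.le _) (Real.rpow_nonneg hc0.le _),
      ← Real.rpow_mul hz0.le, ← Real.rpow_mul hc0.le, ← mul_assoc,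
      mul_comm ((2*(m:ℝ)+1) ^ ((d:ℝ)-1)) ((1+(m:ℝ)) ^ (-(s+Qi)*rt)), mul_assoc,
      ← Real.rpow_add hc0]
    congr 1
    ring
  have hE : -1 ≤ ((d:ℝ)-1)*(1-Qi*rt) - (s+Qi)*rt := by nlinarith [hs']
  have R1 : ∀ m : ℕ, (1+(m:ℝ))⁻¹ ≤ (((2*m+1)^(d-1) : ℕ) : ℝ) * g m ^ rt := by
    intro m
    have hz1 : (1:ℝ) ≤ 1+(m:ℝ) := by have := Nat.cast_nonneg (α := ℝ) m; linarith
    have hz0 : (0:ℝ) < 1+(m:ℝ) := by positivity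
    have hzc : 1+(m:ℝ) ≤ 2*(m:ℝ)+1 := by
      have := Nat.cast_nonneg (α := ℝ) m
      linarith
    rw [hprodA m]
    calc (1+(m:ℝ))⁻¹ = (1+(m:ℝ)) ^ (-1 : ℝ) := (Real.rpow_neg_one _).symm
      _ ≤ (1+(m:ℝ)) ^ (((d:ℝ)-1)*(1-Qi*rt) - (s+Qi)*rt) :=
          Real.rpow_le_rpow_of_exponent_le hz1 hE
      _ = (1+(m:ℝ)) ^ (-(s+Qi)*rt) * (1+(m:ℝ)) ^ (((d:ℝ)-1)*(1-Qi*rt)) := by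
          rw [← Real.rpow_add hz0]
          congr 1
          ring
      _ ≤ (1+(m:ℝ)) ^ (-(s+Qi)*rt) * (2*(m:ℝ)+1) ^ (((d:ℝ)-1)*(1-Qi*rt)) := by
          have hexp : 0 ≤ ((d:ℝ)-1)*(1-Qi*rt) := by
            have hd1 : (1:ℝ) ≤ (d:ℝ) := by exact_mod_cast hd
            nlinarith
          exact mul_le_mul_of_nonneg_left
            (Real.rpow_le_rpow hz0.le hzc hexp) (Real.rpow_nonneg hz0.le _)
  -- the test sequence for a given N
  set H : ℕ → ℝ := fun N => ∑ m ∈ Finset.Icc 1 N, (1+(m:ℝ))⁻¹ with hHdef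
  have hHnn : ∀ N, 0 ≤ H N := fun N =>
    Finset.sum_nonneg fun m _ => by positivity
  have key : ∀ N : ℕ, (H N) ^ (1/rt) ≤ C * (Ks * (H N) ^ Qi) := by
    intro N
    set B : Finset (Fin d → ℤ) := (Finset.Icc 1 N).biUnion (fun m => shell d i0 m) with hBdef
    set aN : (Fin d → ℤ) → ℝ := fun k => if k ∈ B then g (k i0).toNat else 0 with haNdef
    have hfin : (Function.support aN).Finite := by
      apply Set.Finite.subset B.finite_toSet
      intro k hk
      by_contra hkB
      exact hk (if_neg (fun h => hkB (Finset.mem_coe.mpr h)))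
    have hnn : ∀ k, 0 ≤ aN k := by
      intro k
      simp only [haNdef]
      split
      · exact (hg0 _).le
      · exact le_refl 0
    have hpd : Set.PairwiseDisjoint ↑(Finset.Icc 1 N) (fun m => shell d i0 m) :=
      fun m _ m' _ hne => shell_disjoint d i0 hne
    have haval : ∀ m ∈ Finset.Icc 1 N, ∀ k ∈ shell d i0 m, aN k = g m := by
      intro m hm k hk
      have hkB : k ∈ B := Finset.mem_biUnion.mpr ⟨m, hm, hk⟩
      simp only [haNdef, if_pos hkB]
      congr 1
      rw [(mem_shell_iff.mp hk).1]
      exact Int.toNat_natCast m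
    -- LHS lower bound
    have hLHS : ENNReal.ofReal ((H N) ^ (1/rt)) ≤
        lqNorm r (fun k : Fin d → ℤ => ENNReal.ofReal (aN k)) := by
      have h1 : lqNorm r (fun k : Fin d → ℤ => ENNReal.ofReal (aN k))
          = (∑' k : Fin d → ℤ, ENNReal.ofReal (aN k) ^ rt) ^ (1/rt) := by
        simp [lqNorm, hrtop, hrtdef]
      rw [h1, ← ENNReal.ofReal_rpow_of_nonneg (hHnn N) (by positivity)]
      apply ENNReal.rpow_le_rpow _ (by positivity)
      calc ENNReal.ofReal (H N)
          = ∑ m ∈ Finset.Icc 1 N, ENNReal.ofReal ((1+(m:ℝ))⁻¹) :=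
            ENNReal.ofReal_sum_of_nonneg (fun m _ => by positivity)
        _ ≤ ∑ m ∈ Finset.Icc 1 N, ∑ k ∈ shell d i0 m, ENNReal.ofReal (aN k) ^ rt := by
            apply Finset.sum_le_sum
            intro m hm
            have hcong : ∀ k ∈ shell d i0 m,
                ENNReal.ofReal (aN k) ^ rt = ENNReal.ofReal (g m ^ rt) := by
              intro k hk
              rw [haval m hm k hk]
              exact ENNReal.ofReal_rpow_of_nonneg (hg0 m).le hrt.le
            rw [Finset.sum_congr rfl hcong, Finset.sum_const, card_shell, nsmul_eq_mul,
              ← ENNReal.ofReal_natCast, ← ENNReal.ofReal_mul (Nat.cast_nonneg _)]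
            exact ENNReal.ofReal_le_ofReal (R1 m)
        _ = ∑ k ∈ B, ENNReal.ofReal (aN k) ^ rt := (Finset.sum_biUnion hpd).symm
        _ ≤ ∑' k : Fin d → ℤ, ENNReal.ofReal (aN k) ^ rt := ENNReal.sum_le_tsum B
    -- RHS upper bound
    have hRHS : lqNorm q (fun k : Fin d → ℤ =>
        ENNReal.ofReal ((1 + ‖latPt d k‖) ^ s * aN k)) ≤
        ENNReal.ofReal (Ks * (H N) ^ Qi) := by
      by_cases hq : q = ⊤
      · -- supremum bound
        have hQi0' : Qi = 0 := by rw [hQidef, hq]; norm_num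
        rw [hQi0', Real.rpow_zero, mul_one]
        have h1 : lqNorm q (fun k : Fin d → ℤ =>
            ENNReal.ofReal ((1 + ‖latPt d k‖) ^ s * aN k)) =
            ⨆ k : Fin d → ℤ, ENNReal.ofReal ((1 + ‖latPt d k‖) ^ s * aN k) := by
          simp [lqNorm, hq]
        rw [h1]
        apply iSup_le
        intro k
        by_cases hkB : k ∈ B
        · obtain ⟨m, hm, hk⟩ := Finset.mem_biUnion.mp hkB
          apply ENNReal.ofReal_le_ofReal
          rw [haval m hm k hk]
          have hz0 : (0:ℝ) < 1+(m:ℝ) := by positivity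
          have hg' : g m = (1+(m:ℝ)) ^ (-s) := by
            rw [hgdef]
            simp only [hQi0']
            rw [show -(s+0) = -s by ring, show -((d:ℝ)-1)*0 = 0 by ring, Real.rpow_zero,
              mul_one]
          calc (1 + ‖latPt d k‖) ^ s * g m ≤ (Ks * (1+(m:ℝ)) ^ s) * g m :=
                mul_le_mul_of_nonneg_right (hws m k hk) (hg0 m).le
            _ = Ks := by
                rw [hg', mul_assoc, ← Real.rpow_add hz0, add_neg_cancel, Real.rpow_zero,
                  mul_one]
        · have : aN k = 0 := by simp only [haNdef, if_neg hkB]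
          rw [this, mul_zero, ENNReal.ofReal_zero]
          exact bot_le
      · -- q finite
        have hqt : 0 < q.toReal := ENNReal.toReal_pos (hr.trans hrq).ne' hq
        set qt : ℝ := q.toReal with hqtdef
        have hQiqt : Qi * qt = 1 := by
          rw [hQidef, one_div, inv_mul_cancel₀ hqt.ne']
        have R2 : ∀ m : ℕ, (((2*m+1)^(d-1) : ℕ) : ℝ) * (Ks * (1+(m:ℝ)) ^ s * g m) ^ qt
            = Ks ^ qt * (1+(m:ℝ))⁻¹ := by
          intro m
          have hz0 : (0:ℝ) < 1+(m:ℝ) := by positivity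
          have hc0 : (0:ℝ) < 2*(m:ℝ)+1 := by positivity
          rw [Real.mul_rpow (mul_nonneg hKs0.le (Real.rpow_nonneg hz0.le _)) (hg0 m).le,
            Real.mul_rpow hKs0.le (Real.rpow_nonneg hz0.le _)]
          rw [hgdef]
          simp only []
          rw [Real.mul_rpow (Real.rpow_nonneg hz0.le _) (Real.rpow_nonneg hc0.le _),
            ← Real.rpow_mul hz0.le, ← Real.rpow_mul hz0.le, ← Real.rpow_mul hc0.le,
            hcast m]
          have e1 : (1+(m:ℝ)) ^ (s*qt) * ((1+(m:ℝ)) ^ (-(s+Qi)*qt)) = (1+(m:ℝ))⁻¹ := by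
            rw [← Real.rpow_add hz0, show s*qt + -(s+Qi)*qt = -(Qi*qt) by ring, hQiqt,
              Real.rpow_neg_one]
          have e2 : (2*(m:ℝ)+1) ^ ((d:ℝ)-1) * (2*(m:ℝ)+1) ^ (-((d:ℝ)-1)*Qi*qt) = 1 := by
            rw [← Real.rpow_add hc0]
            rw [show (d:ℝ)-1 + -((d:ℝ)-1)*Qi*qt = ((d:ℝ)-1)*(1 - Qi*qt) by ring, hQiqt]
            simp
          calc (2*(m:ℝ)+1) ^ ((d:ℝ)-1) *
                (Ks ^ qt * (1+(m:ℝ)) ^ (s*qt) *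
                  ((1+(m:ℝ)) ^ (-(s+Qi)*qt) * (2*(m:ℝ)+1) ^ (-((d:ℝ)-1)*Qi*qt)))
              = Ks ^ qt * ((1+(m:ℝ)) ^ (s*qt) * ((1+(m:ℝ)) ^ (-(s+Qi)*qt))) *
                ((2*(m:ℝ)+1) ^ ((d:ℝ)-1) * (2*(m:ℝ)+1) ^ (-((d:ℝ)-1)*Qi*qt)) := by ring
            _ = Ks ^ qt * (1+(m:ℝ))⁻¹ := by rw [e1, e2, mul_one]
        have h1 : lqNorm q (fun k : Fin d → ℤ =>
            ENNReal.ofReal ((1 + ‖latPt d k‖) ^ s * aN k)) =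
            (∑ k ∈ B, ENNReal.ofReal ((1 + ‖latPt d k‖) ^ s * aN k) ^ qt) ^ (1/qt) := by
          rw [lqNorm, if_neg hq, ← hqtdef]
          congr 1
          apply tsum_eq_sum
          intro k hkB
          have : aN k = 0 := by simp only [haNdef, if_neg hkB]
          rw [this, mul_zero, ENNReal.ofReal_zero, ENNReal.zero_rpow_of_pos hqt]
        rw [h1]
        have h2 : ∑ k ∈ B, ENNReal.ofReal ((1 + ‖latPt d k‖) ^ s * aN k) ^ qt ≤
            ENNReal.ofReal (Ks ^ qt * H N) := by
          rw [Finset.sum_biUnion hpd]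
          calc ∑ m ∈ Finset.Icc 1 N, ∑ k ∈ shell d i0 m,
                ENNReal.ofReal ((1 + ‖latPt d k‖) ^ s * aN k) ^ qt
              ≤ ∑ m ∈ Finset.Icc 1 N, ENNReal.ofReal (Ks ^ qt * (1+(m:ℝ))⁻¹) := by
                apply Finset.sum_le_sum
                intro m hm
                have hterm : ∀ k ∈ shell d i0 m,
                    ENNReal.ofReal ((1 + ‖latPt d k‖) ^ s * aN k) ^ qt ≤
                      ENNReal.ofReal ((Ks * (1+(m:ℝ)) ^ s * g m) ^ qt) := by
                  intro k hk
                  rw [haval m hm k hk,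
                    ENNReal.ofReal_rpow_of_nonneg
                      (mul_nonneg (Real.rpow_nonneg (by positivity) _) (hg0 m).le) hqt.le]
                  apply ENNReal.ofReal_le_ofReal
                  apply Real.rpow_le_rpow
                    (mul_nonneg (Real.rpow_nonneg (by positivity) _) (hg0 m).le)
                    (mul_le_mul_of_nonneg_right (hws m k hk) (hg0 m).le) hqt.le
                calc ∑ k ∈ shell d i0 m,
                      ENNReal.ofReal ((1 + ‖latPt d k‖) ^ s * aN k) ^ qt
                    ≤ ∑ _k ∈ shell d i0 m,
                      ENNReal.ofReal ((Ks * (1+(m:ℝ)) ^ s * g m) ^ qt) :=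
                      Finset.sum_le_sum hterm
                  _ = ENNReal.ofReal (Ks ^ qt * (1+(m:ℝ))⁻¹) := by
                      rw [Finset.sum_const, card_shell, nsmul_eq_mul,
                        ← ENNReal.ofReal_natCast, ← ENNReal.ofReal_mul (Nat.cast_nonneg _),
                        R2 m]
            _ = ENNReal.ofReal (Ks ^ qt * H N) := by
                rw [← ENNReal.ofReal_sum_of_nonneg (fun m _ => by positivity), hHdef]
                congr 1
                rw [← Finset.mul_sum]
        calc (∑ k ∈ B, ENNReal.ofReal ((1 + ‖latPt d k‖) ^ s * aN k) ^ qt) ^ (1/qt)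
            ≤ (ENNReal.ofReal (Ks ^ qt * H N)) ^ (1/qt) :=
              ENNReal.rpow_le_rpow h2 (by positivity)
          _ = ENNReal.ofReal (Ks * (H N) ^ Qi) := by
              rw [ENNReal.ofReal_rpow_of_nonneg
                (mul_nonneg (by positivity) (hHnn N)) (by positivity)]
              congr 1
              rw [Real.mul_rpow (by positivity) (hHnn N), ← Real.rpow_mul hKs0.le,
                mul_one_div, div_self hqt.ne', Real.rpow_one, hQidef, hqtdef]
    -- combine
    have hcomb := hA aN hfin hnn
    have h3 : ENNReal.ofReal ((H N) ^ (1/rt)) ≤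
        ENNReal.ofReal (C * (Ks * (H N) ^ Qi)) := by
      calc ENNReal.ofReal ((H N) ^ (1/rt))
          ≤ lqNorm r (fun k : Fin d → ℤ => ENNReal.ofReal (aN k)) := hLHS
        _ ≤ ENNReal.ofReal C * lqNorm q (fun k : Fin d → ℤ =>
              ENNReal.ofReal ((1 + ‖latPt d k‖) ^ s * aN k)) := hcomb
        _ ≤ ENNReal.ofReal C * ENNReal.ofReal (Ks * (H N) ^ Qi) :=
            mul_le_mul_right hRHS _
        _ = ENNReal.ofReal (C * (Ks * (H N) ^ Qi)) := (ENNReal.ofReal_mul hC.le).symm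
    exact (ENNReal.ofReal_le_ofReal_iff
      (mul_nonneg hC.le (mul_nonneg hKs0.le (Real.rpow_nonneg (hHnn N) _)))).mp h3
  -- contradiction with divergence of harmonic series
  have htend : Filter.Tendsto H Filter.atTop Filter.atTop := harmonic_tendsto
  obtain ⟨N, hN⟩ := (htend.eventually_ge_atTop (max 1 ((C*Ks) ^ (1/δ) + 1))).exists
  have hH1 : 1 ≤ H N := le_trans (le_max_left _ _) hN
  have hH0 : 0 < H N := lt_of_lt_of_le one_pos hH1
  have hgt : C * Ks < (H N) ^ δ := by
    have h1 : (C*Ks) ^ (1/δ) + 1 ≤ H N := le_trans (le_max_right _ _) hN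
    have h2 : ((C*Ks) ^ (1/δ)) < H N := lt_of_lt_of_le (lt_add_one _) h1
    have h3 : (((C*Ks) ^ (1/δ))) ^ δ < (H N) ^ δ :=
      Real.rpow_lt_rpow (Real.rpow_nonneg (by positivity) _) h2 hδ
    rwa [← Real.rpow_mul (by positivity), one_div_mul_cancel hδ.ne', Real.rpow_one] at h3
  have hle : (H N) ^ δ ≤ C * Ks := by
    have hk := key N
    have e : (H N) ^ (1/rt) = (H N) ^ δ * (H N) ^ Qi := by
      rw [← Real.rpow_add hH0]
      congr 1
      rw [hδdef]
      ring
    rw [e] at hk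
    have hQpos : 0 < (H N) ^ Qi := Real.rpow_pos_of_pos hH0 _
    have := (mul_le_mul_iff_of_pos_right hQpos).mp (by linarith [hk] : (H N) ^ δ * (H N) ^ Qi ≤ (C * Ks) * (H N) ^ Qi)
    exact this
  linarith

end WSE

/-- For `0 < r < q ≤ ∞` and `s ∈ ℝ`, the weighted inequality
`‖(a_k)‖_{ℓ^r} ≤ C ‖(⟨k⟩^s a_k)‖_{ℓ^q}` holds for all finitely supported nonnegative
sequences (for some constant `C > 0`) if and only if `s > d(1/r − 1/q)`. -/


theorem weighted_sequence_embedding_iff (d : ℕ) (hd : 0 < d) (r q : ℝ≥0∞)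
    (hr : 0 < r) (hrq : r < q) (s : ℝ) :
    (∃ C : ℝ, 0 < C ∧ ∀ a : (Fin d → ℤ) → ℝ, (Function.support a).Finite →
        (∀ k, 0 ≤ a k) →
        lqNorm r (fun k : Fin d → ℤ => ENNReal.ofReal (a k)) ≤
          ENNReal.ofReal C *
            lqNorm q (fun k : Fin d → ℤ =>
              ENNReal.ofReal ((1 + ‖latPt d k‖) ^ s * a k))) ↔
      s > d * (1 / r.toReal - 1 / q.toReal) := by
  constructor
  · exact WSE.necessity d hd r q hr hrq s
  · intro hs
    exact WSE.sufficiency d hd r q hr hrq s hs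
end
end

section
/- Let 2 ≤ r ≤ ∞, η ∈ 𝓢(ℝ^d) with 𝓕η supported in [−1/8,1/8]^d, and (a_k)_{k∈ℤ^d} finitely supported complex. For f(x) = ∑_k a_k e^{ik·x} η(x−k), one has ‖f‖_{L^r} ≤ C ‖(a_k)‖_{ℓ^r}, with C depending only on η, d, r. -/
open MeasureTheory Metric Set ENNReal
noncomputable section

namespace ModSumAux

lemma coord_le_norm {d : ℕ} (y : EuclideanSpace ℝ (Fin d)) (i : Fin d) : |y i| ≤ ‖y‖ := by
  rw [EuclideanSpace.norm_eq]
  rw [← Real.sqrt_sq_eq_abs]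
  apply Real.sqrt_le_sqrt
  calc y i ^ 2 = ‖y i‖ ^ 2 := by rw [Real.norm_eq_abs, sq_abs]
  _ ≤ ∑ j, ‖y j‖ ^ 2 :=
      Finset.single_le_sum (f := fun j => ‖y j‖ ^ 2) (fun j _ => sq_nonneg _) (Finset.mem_univ i)

lemma tsum_pi_prod : ∀ (d : ℕ) (f : Fin d → ℤ → ℝ≥0∞),
    ∑' k : Fin d → ℤ, ∏ i, f i (k i) = ∏ i, ∑' m : ℤ, f i m := by
  intro d
  induction d with
  | zero =>
    intro f
    simp only [Finset.univ_eq_empty, Finset.prod_empty]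
    rw [tsum_eq_single (fun i => i.elim0)]
    · exact fun b hb => absurd (Subsingleton.elim b _) hb
  | succ n ih =>
    intro f
    rw [← (Fin.consEquiv fun _ : Fin (n+1) => ℤ).tsum_eq]
    simp only [Fin.consEquiv_apply]
    rw [ENNReal.tsum_prod (f := fun a b => ∏ x : Fin (n+1), f x (Fin.cons a b x))]
    have : ∀ (a : ℤ) (b : Fin n → ℤ),
        (∏ i, f i ((Fin.cons a b : Fin (n+1) → ℤ) i)) = f 0 a * ∏ i : Fin n, f i.succ (b i) := by
      intro a b
      rw [Fin.prod_univ_succ]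
      simp
    simp_rw [this, ENNReal.tsum_mul_left, ih fun i => f i.succ, ENNReal.tsum_mul_right]
    rw [Fin.prod_univ_succ]

def C1D : ℝ≥0∞ := ∑' n : ℤ, ENNReal.ofReal ((max 1 |(n:ℝ)|) ^ 2)⁻¹

lemma C1D_ne_top : C1D ≠ ∞ := by
  have hsum : Summable (fun n : ℤ => 1 / (n:ℝ) ^ 2 + if n = 0 then 1 else 0) := by
    refine Summable.add (Real.summable_one_div_int_pow.mpr one_lt_two) ?_
    exact summable_of_ne_finset_zero (s := {0}) (by intro b hb; simp at hb; simp [hb])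
  have hle : ∀ n : ℤ, ENNReal.ofReal ((max 1 |(n:ℝ)|) ^ 2)⁻¹ ≤
      ENNReal.ofReal (1 / (n:ℝ) ^ 2 + if n = 0 then 1 else 0) := by
    intro n
    apply ENNReal.ofReal_le_ofReal
    rcases eq_or_ne n 0 with h | h
    · simp [h]
    · have h1 : (1:ℝ) ≤ |(n:ℝ)| := by
        rw [← Int.cast_abs]; exact_mod_cast Int.one_le_abs h
      rw [max_eq_right h1]
      simp only [h, if_false, add_zero, one_div, sq_abs]
      exact le_of_eq rfl
  have hcalc : C1D ≤ ENNReal.ofReal (∑' n : ℤ, (1 / (n:ℝ) ^ 2 + if n = 0 then 1 else 0)) := by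
    rw [ENNReal.ofReal_tsum_of_nonneg (fun n => by positivity) hsum]
    exact ENNReal.tsum_le_tsum hle
  exact ne_top_of_le_ne_top ENNReal.ofReal_ne_top hcalc

lemma oneD_bound (t : ℝ) :
    ∑' m : ℤ, ENNReal.ofReal ((1 + |t - (m:ℝ)|) ^ 2)⁻¹ ≤ C1D := by
  rw [← (Equiv.addRight (⌊t⌋ : ℤ)).tsum_eq]
  refine ENNReal.tsum_le_tsum fun n => ?_
  apply ENNReal.ofReal_le_ofReal
  have hfr : 0 ≤ t - ⌊t⌋ ∧ t - ⌊t⌋ < 1 := ⟨sub_nonneg.mpr (Int.floor_le t), by have := Int.lt_floor_add_one t; push_cast; linarith⟩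
  have key : max 1 |(n:ℝ)| ≤ 1 + |t - ((n + ⌊t⌋ : ℤ):ℝ)| := by
    have h2 : t - ((n + ⌊t⌋ : ℤ):ℝ) = (t - ⌊t⌋) - n := by push_cast; ring
    rw [h2]
    refine max_le (by have := abs_nonneg ((t - ⌊t⌋) - (n:ℝ)); linarith) ?_
    have : |(n:ℝ)| - |t - ⌊t⌋| ≤ |(t - ⌊t⌋) - n| := by
      calc |(n:ℝ)| - |t - ⌊t⌋| ≤ |(n:ℝ) - (t - ⌊t⌋)| := abs_sub_abs_le_abs_sub _ _
      _ = |(t - ⌊t⌋) - n| := abs_sub_comm _ _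
    have h3 : |t - (⌊t⌋:ℝ)| ≤ 1 := by rw [abs_of_nonneg hfr.1]; exact hfr.2.le
    linarith
  refine inv_anti₀ (by positivity) ?_
  have h1 : (0:ℝ) ≤ max 1 |(n:ℝ)| := le_trans zero_le_one (le_max_left _ _)
  exact pow_le_pow_left₀ h1 (by simpa using key) 2

end ModSumAux

section ModSumAux2
open ModSumAux
lemma holder_step {ι : Type*} (s : Finset ι) (A B : ι → ℝ≥0∞) (K : ℝ≥0∞)
    (hK : ∑ k ∈ s, B k ≤ K) (hKtop : K ≠ ∞) (p : ℝ) (hp : 1 ≤ p) :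
    (∑ k ∈ s, A k * B k) ^ p ≤ K ^ (p - 1) * ∑ k ∈ s, A k ^ p * B k := by
  set W := ∑ k ∈ s, B k with hW
  rcases eq_or_ne W 0 with hW0 | hW0
  · have hB : ∀ k ∈ s, B k = 0 := by
      intro k hk
      exact Finset.sum_eq_zero_iff.1 hW0 k hk
    have : (∑ k ∈ s, A k * B k) = 0 := Finset.sum_eq_zero fun k hk => by rw [hB k hk, mul_zero]
    rw [this, ENNReal.zero_rpow_of_pos (by linarith)]
    exact zero_le
  · have hWtop : W ≠ ∞ := ne_top_of_le_ne_top hKtop hK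
    have hw1 : ∑ k ∈ s, B k / W = 1 := by
      simp_rw [div_eq_mul_inv]
      rw [← Finset.sum_mul, ← hW, ← div_eq_mul_inv, ENNReal.div_self hW0 hWtop]
    have h := ENNReal.rpow_arith_mean_le_arith_mean_rpow s (fun k => B k / W) A hw1 hp
    have hWcan : ∀ k, W * (B k / W * A k) = A k * B k := by
      intro k
      rw [ENNReal.div_eq_inv_mul, ← mul_assoc, ← mul_assoc, ENNReal.mul_inv_cancel hW0 hWtop,
        one_mul, mul_comm]
    have hL : (∑ k ∈ s, A k * B k) = W * ∑ k ∈ s, B k / W * A k := by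
      rw [Finset.mul_sum]
      exact Finset.sum_congr rfl fun k _ => (hWcan k).symm
    have hR : ∑ k ∈ s, B k / W * A k ^ p = W⁻¹ * ∑ k ∈ s, A k ^ p * B k := by
      rw [Finset.mul_sum]
      refine Finset.sum_congr rfl fun k _ => ?_
      rw [ENNReal.div_eq_inv_mul, mul_assoc, mul_comm (B k) (A k ^ p)]
    calc (∑ k ∈ s, A k * B k) ^ p = W ^ p * (∑ k ∈ s, B k / W * A k) ^ p := by
          rw [hL, ENNReal.mul_rpow_of_nonneg _ _ (by linarith)]
      _ ≤ W ^ p * (W⁻¹ * ∑ k ∈ s, A k ^ p * B k) := by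
          rw [← hR]; exact mul_le_mul_right h _
      _ = W ^ (p - 1) * ∑ k ∈ s, A k ^ p * B k := by
          rw [← mul_assoc]
          congr 1
          have hWp : W ^ p = W ^ (p - 1) * W := by
            calc W ^ p = W ^ ((p - 1) + 1) := by norm_num
              _ = W ^ (p - 1) * W ^ (1:ℝ) := ENNReal.rpow_add _ _ hW0 hWtop
              _ = W ^ (p - 1) * W := by rw [ENNReal.rpow_one]
          rw [hWp, mul_assoc, ENNReal.mul_inv_cancel hW0 hWtop, mul_one]
      _ ≤ K ^ (p - 1) * ∑ k ∈ s, A k ^ p * B k :=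
          mul_le_mul_left (ENNReal.rpow_le_rpow hK (by linarith)) _

end ModSumAux2

section ModSumAux3
open ModSumAux

/-- Pointwise decay of a Schwartz function against the product weight. -/
lemma schwartz_prod_decay {d : ℕ} (η : SchwartzMap (EuclideanSpace ℝ (Fin d)) ℂ) :
    ∃ Cd : ℝ, 0 ≤ Cd ∧ ∀ y : EuclideanSpace ℝ (Fin d),
      ‖η y‖ ≤ Cd * ∏ i, ((1 + |y i|) ^ 2)⁻¹ := by
  obtain ⟨C0, hC0pos, hC0⟩ := η.decay 0 0
  obtain ⟨C1, hC1pos, hC1⟩ := η.decay (2 * d) 0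
  refine ⟨2 ^ (2 * d) * (C0 + C1), by positivity, ?_⟩
  intro y
  have hkey : ‖η y‖ * (1 + ‖y‖) ^ (2 * d) ≤ 2 ^ (2 * d) * (C0 + C1) := by
    have h1 : (1 + ‖y‖) ^ (2 * d) ≤ 2 ^ (2 * d) * (1 + ‖y‖ ^ (2 * d)) := by
      calc (1 + ‖y‖) ^ (2 * d) ≤ (2 * max 1 ‖y‖) ^ (2 * d) := by
            apply pow_le_pow_left₀ (by positivity)
            have := le_max_left (1:ℝ) ‖y‖; have := le_max_right (1:ℝ) ‖y‖; linarith
        _ = 2 ^ (2 * d) * (max 1 ‖y‖) ^ (2 * d) := by rw [mul_pow]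
        _ ≤ 2 ^ (2 * d) * (1 + ‖y‖ ^ (2 * d)) := by
            apply mul_le_mul_of_nonneg_left _ (by positivity)
            rcases max_cases 1 ‖y‖ with ⟨h, _⟩ | ⟨h, _⟩ <;> rw [h]
            · rw [one_pow]; have := pow_nonneg (norm_nonneg y) (2*d); linarith
            · have h1 : ‖y‖ ^ (2 * d) ≤ 1 + ‖y‖ ^ (2 * d) := by linarith
              exact h1
    have h2 := hC0 y
    have h3 := hC1 y
    simp only [pow_zero, one_mul, norm_iteratedFDeriv_zero] at h2 h3
    calc ‖η y‖ * (1 + ‖y‖) ^ (2 * d) ≤ ‖η y‖ * (2 ^ (2 * d) * (1 + ‖y‖ ^ (2 * d))) :=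
          mul_le_mul_of_nonneg_left h1 (norm_nonneg _)
      _ = 2 ^ (2 * d) * (‖η y‖ + ‖y‖ ^ (2 * d) * ‖η y‖) := by ring
      _ ≤ 2 ^ (2 * d) * (C0 + C1) := by
          apply mul_le_mul_of_nonneg_left _ (by positivity)
          exact add_le_add h2 h3
  have hprod : ∏ i, (1 + |y i|) ^ 2 ≤ (1 + ‖y‖) ^ (2 * d) := by
    calc ∏ i, (1 + |y i|) ^ 2 ≤ ∏ i : Fin d, (1 + ‖y‖) ^ 2 := by
          apply Finset.prod_le_prod (fun i _ => by positivity)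
          intro i _
          apply pow_le_pow_left₀ (by positivity)
          have := coord_le_norm y i; linarith
      _ = (1 + ‖y‖) ^ (2 * d) := by
          rw [Finset.prod_const, Finset.card_univ, Fintype.card_fin, ← pow_mul]
  have hP : (0:ℝ) < ∏ i, (1 + |y i|) ^ 2 := by
    apply Finset.prod_pos; intro i _; positivity
  have hfin : ‖η y‖ * ∏ i, (1 + |y i|) ^ 2 ≤ 2 ^ (2 * d) * (C0 + C1) :=
    le_trans (mul_le_mul_of_nonneg_left hprod (norm_nonneg _)) hkey
  rw [Finset.prod_inv_distrib, ← div_eq_mul_inv, le_div_iff₀ hP]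
  exact hfin

lemma schwartz_sum_bound {d : ℕ} (η : SchwartzMap (EuclideanSpace ℝ (Fin d)) ℂ) :
    ∃ K : ℝ≥0∞, K ≠ ∞ ∧ ∀ x : EuclideanSpace ℝ (Fin d),
      ∑' k : Fin d → ℤ, (‖η (x - latPt d k)‖₊ : ℝ≥0∞) ≤ K := by
  obtain ⟨Cd, hCd0, hCd⟩ := schwartz_prod_decay η
  refine ⟨ENNReal.ofReal Cd * C1D ^ d,
    ENNReal.mul_ne_top ENNReal.ofReal_ne_top (ENNReal.pow_ne_top C1D_ne_top), fun x => ?_⟩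
  have hterm : ∀ k : Fin d → ℤ, (‖η (x - latPt d k)‖₊ : ℝ≥0∞) ≤
      ENNReal.ofReal Cd * ∏ i, ENNReal.ofReal ((1 + |x i - (k i : ℝ)|) ^ 2)⁻¹ := by
    intro k
    have hsub : ∀ i, (x - latPt d k) i = x i - (k i : ℝ) := fun i => by simp [latPt]
    calc (‖η (x - latPt d k)‖₊ : ℝ≥0∞) = ENNReal.ofReal ‖η (x - latPt d k)‖ :=
          (ofReal_norm _).symm
      _ ≤ ENNReal.ofReal (Cd * ∏ i, ((1 + |(x - latPt d k) i|) ^ 2)⁻¹) :=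
          ENNReal.ofReal_le_ofReal (hCd _)
      _ = ENNReal.ofReal Cd * ∏ i, ENNReal.ofReal ((1 + |x i - (k i : ℝ)|) ^ 2)⁻¹ := by
          simp_rw [hsub]
          rw [ENNReal.ofReal_mul hCd0,
            ENNReal.ofReal_prod_of_nonneg (fun i _ => by positivity)]
  calc ∑' k : Fin d → ℤ, (‖η (x - latPt d k)‖₊ : ℝ≥0∞)
      ≤ ∑' k : Fin d → ℤ, ENNReal.ofReal Cd *
          ∏ i, ENNReal.ofReal ((1 + |x i - (k i : ℝ)|) ^ 2)⁻¹ := ENNReal.tsum_le_tsum hterm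
    _ = ENNReal.ofReal Cd * ∑' k : Fin d → ℤ,
          ∏ i, ENNReal.ofReal ((1 + |x i - (k i : ℝ)|) ^ 2)⁻¹ := ENNReal.tsum_mul_left
    _ = ENNReal.ofReal Cd * ∏ i, ∑' m : ℤ, ENNReal.ofReal ((1 + |x i - (m : ℝ)|) ^ 2)⁻¹ := by
          rw [tsum_pi_prod d fun i m => ENNReal.ofReal ((1 + |x i - (m : ℝ)|) ^ 2)⁻¹]
    _ ≤ ENNReal.ofReal Cd * C1D ^ d := by
          apply mul_le_mul_right 
          calc ∏ i, ∑' m : ℤ, ENNReal.ofReal ((1 + |x i - (m : ℝ)|) ^ 2)⁻¹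
              ≤ ∏ _i : Fin d, C1D := Finset.prod_le_prod' fun i _ => oneD_bound (x i)
            _ = C1D ^ d := by rw [Finset.prod_const, Finset.card_univ, Fintype.card_fin]

end ModSumAux3

/-- For `2 ≤ r ≤ ∞`, `η` Schwartz with `𝓕η` supported in `[-1/8,1/8]^d`, and finitely
supported complex `(a_k)`, the function `f(x) = ∑_k a_k e^{ik·x} η(x−k)` satisfies
`‖f‖_{L^r} ≤ C ‖(a_k)‖_{ℓ^r}` with `C = C(η,d,r)`. -/
theorem lr_norm_of_modulated_sum (d : ℕ) (hd : 0 < d) (r : ℝ≥0∞) (hr : 2 ≤ r)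
    (η : SchwartzMap (EuclideanSpace ℝ (Fin d)) ℂ)
    (hη : Function.support (paperFT d ⇑η) ⊆ cube d (1/8)) :
    ∃ C : ℝ, 0 < C ∧ ∀ a : (Fin d → ℤ) → ℂ, (Function.support a).Finite →
      eLpNorm (fun x : EuclideanSpace ℝ (Fin d) => ∑' k : Fin d → ℤ,
          a k * Complex.exp (Complex.I * ((inner ℝ (latPt d k) x : ℝ) : ℂ)) *
            η (x - latPt d k)) r volume ≤
        ENNReal.ofReal C * lqNorm r (fun k : Fin d → ℤ => (‖a k‖₊ : ℝ≥0∞)) := by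
  obtain ⟨K, hKtop, hK⟩ := schwartz_sum_bound η
  set Iη : ℝ≥0∞ := ∫⁻ x, (‖η x‖₊ : ℝ≥0∞) with hIη
  have hItop : Iη ≠ ∞ := (η.integrable (μ := volume)).2.ne
  set M : ℝ≥0∞ := (1 + K) * (1 + Iη) with hM
  have hMtop : M ≠ ∞ := ENNReal.mul_ne_top (by simp [hKtop]) (by simp [hItop])
  have hMC : M ≤ ENNReal.ofReal (M.toReal + 1) := by
    calc M = ENNReal.ofReal M.toReal := (ENNReal.ofReal_toReal hMtop).symm
      _ ≤ ENNReal.ofReal (M.toReal + 1) := ENNReal.ofReal_le_ofReal (by linarith)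
  have hKM : K ≤ M := by
    calc K ≤ 1 + K := le_add_self
      _ = (1 + K) * 1 := (mul_one _).symm
      _ ≤ (1 + K) * (1 + Iη) := mul_le_mul_right le_self_add _
  have hMpos : (0:ℝ) ≤ M.toReal := ENNReal.toReal_nonneg
  refine ⟨M.toReal + 1, by linarith, ?_⟩
  intro a ha
  classical
  set s : Finset (Fin d → ℤ) := ha.toFinset with hs
  set F : (Fin d → ℤ) → EuclideanSpace ℝ (Fin d) → ℂ := fun k x =>
    a k * Complex.exp (Complex.I * ((inner ℝ (latPt d k) x : ℝ) : ℂ)) * η (x - latPt d k) with hF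
  have hfun : (fun x : EuclideanSpace ℝ (Fin d) => ∑' k, F k x) = fun x => ∑ k ∈ s, F k x := by
    funext x
    refine tsum_eq_sum fun k hk => ?_
    have hk0 : a k = 0 := by
      by_contra h
      exact hk (by simpa [hs] using h)
    simp [hF, hk0]
  have hpt : ∀ x, (‖∑ k ∈ s, F k x‖₊ : ℝ≥0∞) ≤
      ∑ k ∈ s, (‖a k‖₊ : ℝ≥0∞) * (‖η (x - latPt d k)‖₊ : ℝ≥0∞) := by
    intro x
    have h1 : (‖∑ k ∈ s, F k x‖₊ : ℝ≥0∞) ≤ ∑ k ∈ s, (‖F k x‖₊ : ℝ≥0∞) := by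
      rw [← ENNReal.coe_finset_sum]
      exact_mod_cast nnnorm_sum_le s (fun k => F k x)
    refine h1.trans (le_of_eq (Finset.sum_congr rfl fun k _ => ?_))
    have hexp : ‖Complex.exp (Complex.I * ((inner ℝ (latPt d k) x : ℝ) : ℂ))‖ = 1 := by
      rw [mul_comm, Complex.norm_exp_ofReal_mul_I]
    rw [← enorm_eq_nnnorm, ← enorm_eq_nnnorm, ← enorm_eq_nnnorm, ← ofReal_norm, ← ofReal_norm, ← ofReal_norm]
    rw [hF]
    simp only [norm_mul, hexp, mul_one]
    rw [ENNReal.ofReal_mul (norm_nonneg _)]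
  rw [hfun]
  rcases eq_or_ne r ∞ with hrtop | hrtop
  · subst hrtop
    rw [eLpNorm_exponent_top]
    have hbd : ∀ x, (‖∑ k ∈ s, F k x‖₊ : ℝ≥0∞) ≤
        ENNReal.ofReal (M.toReal + 1) * ⨆ j, (‖a j‖₊ : ℝ≥0∞) := by
      intro x
      calc (‖∑ k ∈ s, F k x‖₊ : ℝ≥0∞)
          ≤ ∑ k ∈ s, (‖a k‖₊ : ℝ≥0∞) * (‖η (x - latPt d k)‖₊ : ℝ≥0∞) := hpt x
        _ ≤ ∑ k ∈ s, (⨆ j, (‖a j‖₊ : ℝ≥0∞)) * (‖η (x - latPt d k)‖₊ : ℝ≥0∞) :=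
            Finset.sum_le_sum fun k _ =>
              mul_le_mul_left (le_iSup (fun j => ((‖a j‖₊ : ℝ≥0∞))) k) _
        _ = (⨆ j, (‖a j‖₊ : ℝ≥0∞)) * ∑ k ∈ s, (‖η (x - latPt d k)‖₊ : ℝ≥0∞) := by
            rw [Finset.mul_sum]
        _ ≤ (⨆ j, (‖a j‖₊ : ℝ≥0∞)) * K :=
            mul_le_mul_right ((ENNReal.sum_le_tsum s).trans (hK x)) _
        _ ≤ ENNReal.ofReal (M.toReal + 1) * ⨆ j, (‖a j‖₊ : ℝ≥0∞) := by
            rw [mul_comm]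
            exact mul_le_mul_left (hKM.trans hMC) _
    have hess := essSup_le_of_ae_le (μ := (volume : Measure (EuclideanSpace ℝ (Fin d))))
      (f := fun x => (‖∑ k ∈ s, F k x‖₊ : ℝ≥0∞))
      (ENNReal.ofReal (M.toReal + 1) * ⨆ j, (‖a j‖₊ : ℝ≥0∞))
      (Filter.Eventually.of_forall hbd)
    simpa [eLpNormEssSup, lqNorm, enorm_eq_nnnorm] using hess
  · have hr0 : r ≠ 0 := by
      intro h
      rw [h] at hr
      exact absurd hr (by norm_num)
    set p := r.toReal with hp
    have hp2 : 2 ≤ p := by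
      have := ENNReal.toReal_mono hrtop hr
      simpa using this
    have hp1 : 1 ≤ p := by linarith
    have hp0 : p ≠ 0 := by linarith
    rw [eLpNorm_eq_lintegral_rpow_enorm_toReal hr0 hrtop]
    have hmono : ∀ x, (‖∑ k ∈ s, F k x‖₊ : ℝ≥0∞) ^ p ≤
        K ^ (p - 1) * ∑ k ∈ s, ((‖a k‖₊ : ℝ≥0∞)) ^ p * (‖η (x - latPt d k)‖₊ : ℝ≥0∞) :=
      fun x =>
        le_trans (ENNReal.rpow_le_rpow (hpt x) (by linarith))
          (holder_step s _ _ K ((ENNReal.sum_le_tsum s).trans (hK x)) hKtop p hp1)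
    have hmeas : ∀ k ∈ s, Measurable fun x : EuclideanSpace ℝ (Fin d) =>
        ((‖a k‖₊ : ℝ≥0∞)) ^ p * (‖η (x - latPt d k)‖₊ : ℝ≥0∞) := by
      intro k _
      exact measurable_const.mul
        ((η.continuous.comp (continuous_id.sub continuous_const)).nnnorm.measurable.coe_nnreal_ennreal)
    have htrans : ∀ k : Fin d → ℤ,
        ∫⁻ x, (‖η (x - latPt d k)‖₊ : ℝ≥0∞) = Iη :=
      fun k => lintegral_sub_right_eq_self (fun x => (‖η x‖₊ : ℝ≥0∞)) (latPt d k)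
    have hInt : ∫⁻ x, (‖∑ k ∈ s, F k x‖₊ : ℝ≥0∞) ^ p ≤
        K ^ (p - 1) * Iη * ∑ k ∈ s, ((‖a k‖₊ : ℝ≥0∞)) ^ p := by
      calc ∫⁻ x, (‖∑ k ∈ s, F k x‖₊ : ℝ≥0∞) ^ p
          ≤ ∫⁻ x, K ^ (p - 1) *
              ∑ k ∈ s, ((‖a k‖₊ : ℝ≥0∞)) ^ p * (‖η (x - latPt d k)‖₊ : ℝ≥0∞) :=
            lintegral_mono hmono
        _ = K ^ (p - 1) * ∫⁻ x,
              ∑ k ∈ s, ((‖a k‖₊ : ℝ≥0∞)) ^ p * (‖η (x - latPt d k)‖₊ : ℝ≥0∞) :=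
            lintegral_const_mul' _ _ (ENNReal.rpow_ne_top_of_nonneg (by linarith) hKtop)
        _ = K ^ (p - 1) * ∑ k ∈ s, ∫⁻ x,
              ((‖a k‖₊ : ℝ≥0∞)) ^ p * (‖η (x - latPt d k)‖₊ : ℝ≥0∞) := by
            rw [lintegral_finset_sum s hmeas]
        _ = K ^ (p - 1) * ∑ k ∈ s, ((‖a k‖₊ : ℝ≥0∞)) ^ p * Iη := by
            congr 1
            refine Finset.sum_congr rfl fun k _ => ?_
            rw [lintegral_const_mul' _ _
              (ENNReal.rpow_ne_top_of_nonneg (by linarith) ENNReal.coe_ne_top), htrans k]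
        _ = K ^ (p - 1) * Iη * ∑ k ∈ s, ((‖a k‖₊ : ℝ≥0∞)) ^ p := by
            rw [← Finset.sum_mul, mul_assoc, mul_comm Iη, ← mul_assoc]
    have hlq : lqNorm r (fun k : Fin d → ℤ => (‖a k‖₊ : ℝ≥0∞)) =
        (∑ k ∈ s, ((‖a k‖₊ : ℝ≥0∞)) ^ p) ^ (1 / p) := by
      rw [lqNorm, if_neg hrtop]
      congr 1
      refine tsum_eq_sum fun k hk => ?_
      have hk0 : a k = 0 := by
        by_contra h
        exact hk (by simpa [hs] using h)
      simp [hk0, ENNReal.zero_rpow_of_pos (by linarith : (0:ℝ) < p)] <;> exact (by linarith : (0:ℝ) < p)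
    rw [hlq]
    have hfinal : (∫⁻ x, (‖∑ k ∈ s, F k x‖₊ : ℝ≥0∞) ^ p) ^ (1 / p) ≤
        (K ^ (p - 1) * Iη) ^ (1 / p) * (∑ k ∈ s, ((‖a k‖₊ : ℝ≥0∞)) ^ p) ^ (1 / p) := by
      calc (∫⁻ x, (‖∑ k ∈ s, F k x‖₊ : ℝ≥0∞) ^ p) ^ (1 / p)
          ≤ (K ^ (p - 1) * Iη * ∑ k ∈ s, ((‖a k‖₊ : ℝ≥0∞)) ^ p) ^ (1 / p) :=
            ENNReal.rpow_le_rpow hInt (by positivity)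
        _ = _ := ENNReal.mul_rpow_of_nonneg _ _ (by positivity)
    refine hfinal.trans (mul_le_mul_left ?_ _)
    have h1 : K ^ (p - 1) * Iη ≤ M ^ p := by
      rw [hM, ENNReal.mul_rpow_of_nonneg _ _ (by linarith : (0:ℝ) ≤ p)]
      refine mul_le_mul' ?_ ?_
      · calc K ^ (p - 1) ≤ (1 + K) ^ (p - 1) :=
              ENNReal.rpow_le_rpow le_add_self (by linarith)
          _ ≤ (1 + K) ^ p :=
              ENNReal.rpow_le_rpow_of_exponent_le le_self_add (by linarith)
      · calc Iη ≤ 1 + Iη := le_add_self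
          _ = (1 + Iη) ^ (1:ℝ) := (ENNReal.rpow_one _).symm
          _ ≤ (1 + Iη) ^ p :=
              ENNReal.rpow_le_rpow_of_exponent_le le_self_add (by linarith)
    calc (K ^ (p - 1) * Iη) ^ (1 / p) ≤ (M ^ p) ^ (1 / p) :=
          ENNReal.rpow_le_rpow h1 (by positivity)
      _ = M := by
          rw [← ENNReal.rpow_mul, mul_one_div, div_self hp0, ENNReal.rpow_one]
      _ ≤ ENNReal.ofReal (M.toReal + 1) := hMC
end
end
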